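/- arXiv:2305.05763 — 6 statements merged into one kernel-verified Lean document; each statement's English description precedes it below -/
import Mathlib

section
/- For 1 ≤ r, the volume V(n,r) of the Lee ball of radius r in Z_m^n satisfies V(n,r) ≤ Σ_{i=0}^{n} 2^i · binom(n,i) · binom(r,i). -/
open Finset

def leeWt (m : ℕ) (x : ZMod m) : ℕ := min x.val (m - x.val)

def leeWtV (m n : ℕ) (x : Fin n → ZMod m) : ℕ := ∑ i, leeWt m (x i)

def leeDist (m n : ℕ) (x y : Fin n → ZMod m) : ℕ := leeWtV m n (x - y)

def leeBall (m n : ℕ) [NeZero m] (t : ℕ) (c : Fin n → ZMod m) : Finset (Fin n → ZMod m) :=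
  Finset.univ.filter (fun y => leeDist m n y c ≤ t)

def leeVol (m n : ℕ) [NeZero m] (r : ℕ) : ℕ := (leeBall m n r 0).card

/-! Auxiliary definitions for the injection argument. -/

def psum (m n : ℕ) (y : Fin n → ZMod m) (j : Fin n) : ℕ :=
  ∑ j' ∈ Finset.Iic j, leeWt m (y j')

def supp (m n : ℕ) [NeZero m] (y : Fin n → ZMod m) : Finset (Fin n) :=
  Finset.univ.filter (fun j => y j ≠ 0)

def Phi (m n : ℕ) [NeZero m] (y : Fin n → ZMod m) :
    Finset (Fin n) × (Fin n → Bool) × Finset ℕ :=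
  (supp m n y, fun j => decide (2 * (y j).val ≤ m),
    (supp m n y).image (fun j => psum m n y j - 1))

def sgnSet (n : ℕ) (S : Finset (Fin n)) : Finset (Fin n → Bool) :=
  Fintype.piFinset (fun j => if j ∈ S then Finset.univ else {true})

def targetSet (n r : ℕ) : Finset (Finset (Fin n) × (Fin n → Bool) × Finset ℕ) :=
  Finset.univ.biUnion
    (fun S => ({S} : Finset (Finset (Fin n))) ×ˢ sgnSet n S ×ˢ
      Finset.powersetCard S.card (Finset.range r))

/-- Two functions strictly monotone on a finset with the same image agree on it. -/
lemma eqOn_of_image_eq {α β : Type*} [LinearOrder α] [LinearOrder β]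
    {f g : α → β} (S : Finset α) :
    StrictMonoOn f S → StrictMonoOn g S → S.image f = S.image g →
    ∀ x ∈ S, f x = g x := by
  classical
  induction S using Finset.strongInduction with
  | _ S ih =>
    intro hf hg h x hx
    have hne : S.Nonempty := ⟨x, hx⟩
    have hmin : ∀ F : α → β, StrictMonoOn F S →
        F (S.min' hne) = (S.image F).min' (hne.image F) := by
      intro F hF
      refine le_antisymm (Finset.le_min' _ _ _ ?_)
        (Finset.min'_le _ _ (Finset.mem_image_of_mem F (S.min'_mem hne)))
      intro y hy
      obtain ⟨b, hb, rfl⟩ := Finset.mem_image.mp hy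
      rcases eq_or_lt_of_le (S.min'_le b hb) with hh | hh
      · exact le_of_eq (by rw [hh])
      · exact (hF (S.min'_mem hne) hb hh).le
    have haS : S.min' hne ∈ S := S.min'_mem hne
    have hfa : f (S.min' hne) = g (S.min' hne) := by
      rw [hmin f hf, hmin g hg]
      congr 1
    by_cases hxa : x = S.min' hne
    · rw [hxa]; exact hfa
    · have himg : (S.erase (S.min' hne)).image f = (S.erase (S.min' hne)).image g := by
        have e : ∀ F : α → β, StrictMonoOn F S →
            (S.erase (S.min' hne)).image F = (S.image F).erase (F (S.min' hne)) := by
          intro F hF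
          ext z
          simp only [Finset.mem_image, Finset.mem_erase]
          constructor
          · rintro ⟨b, ⟨hba, hbS⟩, rfl⟩
            exact ⟨fun hc => hba (hF.injOn hbS haS hc), b, hbS, rfl⟩
          · rintro ⟨hz, b, hbS, rfl⟩
            exact ⟨b, ⟨fun hc => hz (by rw [hc]), hbS⟩, rfl⟩
        rw [e f hf, e g hg, h, hfa]
      exact ih _ (Finset.erase_ssubset haS)
        (hf.mono (Finset.erase_subset _ _)) (hg.mono (Finset.erase_subset _ _)) himg
        x (Finset.mem_erase.mpr ⟨hxa, hx⟩)

lemma leeWt_pos {m n : ℕ} [NeZero m] {y : Fin n → ZMod m} {j : Fin n}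
    (hj : j ∈ supp m n y) : 1 ≤ leeWt m (y j) := by
  have h0 : y j ≠ 0 := by simpa [supp] using hj
  have hv : (y j).val ≠ 0 := fun hc => h0 ((ZMod.val_eq_zero _).mp hc)
  have hlt : (y j).val < m := ZMod.val_lt _
  simp only [leeWt]
  omega

lemma psum_pos {m n : ℕ} [NeZero m] {y : Fin n → ZMod m} {j : Fin n}
    (hj : j ∈ supp m n y) : 1 ≤ psum m n y j :=
  le_trans (leeWt_pos hj)
    (Finset.single_le_sum (f := fun j' => leeWt m (y j')) (fun _ _ => Nat.zero_le _)
      (Finset.mem_Iic.mpr le_rfl))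

lemma psum_strict {m n : ℕ} [NeZero m] {y : Fin n → ZMod m} {j j' : Fin n}
    (hlt : j < j') (hj' : j' ∈ supp m n y) : psum m n y j < psum m n y j' := by
  have hsub : insert j' (Finset.Iic j) ⊆ Finset.Iic j' := by
    intro z hz
    rcases Finset.mem_insert.mp hz with rfl | hz
    · exact Finset.mem_Iic.mpr le_rfl
    · exact Finset.mem_Iic.mpr (le_trans (Finset.mem_Iic.mp hz) hlt.le)
  have hnm : j' ∉ Finset.Iic j := fun hc => absurd (Finset.mem_Iic.mp hc) (not_le.mpr hlt)
  have h1 : leeWt m (y j') + psum m n y j ≤ psum m n y j' := by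
    have := Finset.sum_le_sum_of_subset (f := fun z => leeWt m (y z)) hsub
    rwa [Finset.sum_insert hnm] at this
  have := leeWt_pos hj'
  omega

lemma psum_strictMonoOn {m n : ℕ} [NeZero m] (y : Fin n → ZMod m) :
    StrictMonoOn (fun j => psum m n y j - 1) (supp m n y) := by
  intro j hj j' hj' hlt
  have h1 : psum m n y j < psum m n y j' := psum_strict hlt (by simpa using hj')
  have h2 : 1 ≤ psum m n y j := psum_pos (by simpa using hj)
  simp only
  omega

lemma psum_split {m n : ℕ} (y : Fin n → ZMod m) (j : Fin n) :
    psum m n y j = leeWt m (y j) + ∑ j' ∈ Finset.Iio j, leeWt m (y j') := by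
  rw [psum, ← Finset.Iio_insert, Finset.sum_insert (by simp)]

lemma Phi_injective (m n : ℕ) [NeZero m] : Function.Injective (Phi m n) := by
  intro y y' h
  simp only [Phi, Prod.mk.injEq] at h
  obtain ⟨hS, hb, hP⟩ := h
  -- partial sums agree on the support
  have hps : ∀ j ∈ supp m n y, psum m n y j = psum m n y' j := by
    intro j hj
    have hmono' : StrictMonoOn (fun j => psum m n y' j - 1) (supp m n y) := by
      rw [hS]; exact psum_strictMonoOn y'
    have := eqOn_of_image_eq (supp m n y) (psum_strictMonoOn y) hmono'
      (by rw [hP, hS]) j hj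
    have h1 : 1 ≤ psum m n y j := psum_pos hj
    have h2 : 1 ≤ psum m n y' j := psum_pos (hS ▸ hj)
    omega
  -- Lee weights agree coordinatewise
  have hw : ∀ k : ℕ, ∀ j : Fin n, j.val = k → leeWt m (y j) = leeWt m (y' j) := by
    intro k
    induction k using Nat.strong_induction_on with
    | _ k ih =>
      intro j hjk
      by_cases hj : j ∈ supp m n y
      · have h1 := hps j hj
        rw [psum_split, psum_split] at h1
        have h2 : ∑ j' ∈ Finset.Iio j, leeWt m (y j') =
            ∑ j' ∈ Finset.Iio j, leeWt m (y' j') := by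
          refine Finset.sum_congr rfl fun j' hj' => ?_
          have : j' < j := Finset.mem_Iio.mp hj'
          have hv : j'.val < j.val := this
          exact ih j'.val (by omega) j' rfl
        omega
      · have hj2 : j ∉ supp m n y' := by rwa [← hS]
        have e1 : y j = 0 := by
          by_contra hc; exact hj (by simp [supp, hc])
        have e2 : y' j = 0 := by
          by_contra hc; exact hj2 (by simp [supp, hc])
        rw [e1, e2]
  -- recover the values
  funext j
  have hwj := hw j.val j rfl
  have hbj : (2 * (y j).val ≤ m) ↔ (2 * (y' j).val ≤ m) :=
    decide_eq_decide.mp (congrFun hb j)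
  have hv1 : (y j).val < m := ZMod.val_lt _
  have hv2 : (y' j).val < m := ZMod.val_lt _
  simp only [leeWt] at hwj
  have hval : (y j).val = (y' j).val := by
    by_cases hc : 2 * (y j).val ≤ m
    · have hc' := hbj.mp hc
      omega
    · have hc' : ¬ 2 * (y' j).val ≤ m := fun hh => hc (hbj.mpr hh)
      omega
  exact ZMod.val_injective m hval

lemma Phi_mem_target {m n r : ℕ} [NeZero m] (hr1 : 1 ≤ r) {y : Fin n → ZMod m}
    (hy : y ∈ leeBall m n r 0) : Phi m n y ∈ targetSet n r := by
  have hwt : ∑ j, leeWt m (y j) ≤ r := by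
    have := (Finset.mem_filter.mp hy).2
    simpa [leeDist, leeWtV] using this
  rw [targetSet, Finset.mem_biUnion]
  refine ⟨supp m n y, Finset.mem_univ _, ?_⟩
  rw [Finset.mem_product]
  constructor
  · exact Finset.mem_singleton_self _
  rw [Finset.mem_product]
  constructor
  · -- sign component
    rw [sgnSet, Fintype.mem_piFinset]
    intro j
    by_cases hj : j ∈ supp m n y
    · simp [hj]
    · have e1 : y j = 0 := by
        by_contra hc; exact hj (by simp [supp, hc])
      simp [Phi, hj, e1]
  · -- partial sums component
    rw [Finset.mem_powersetCard]
    constructor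
    · intro z hz
      obtain ⟨j, hj, rfl⟩ := Finset.mem_image.mp hz
      have h1 : 1 ≤ psum m n y j := psum_pos hj
      have h2 : psum m n y j ≤ r := by
        refine le_trans ?_ hwt
        exact Finset.sum_le_sum_of_subset (Finset.subset_univ _)
      exact Finset.mem_range.mpr (by omega)
    · exact Finset.card_image_of_injOn (psum_strictMonoOn y).injOn

lemma card_sgnSet {n : ℕ} (S : Finset (Fin n)) : (sgnSet n S).card = 2 ^ S.card := by
  rw [sgnSet, Fintype.card_piFinset]
  have : ∀ j : Fin n, ((if j ∈ S then (Finset.univ : Finset Bool) else {true})).card =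
      if j ∈ S then 2 else 1 := by
    intro j; split <;> simp
  rw [Finset.prod_congr rfl (fun j _ => this j)]
  rw [Finset.prod_ite_mem Finset.univ S (fun _ => 2), Finset.univ_inter, Finset.prod_const]

lemma card_target (n r : ℕ) :
    (targetSet n r).card = ∑ i ∈ Finset.range (n + 1), 2 ^ i * n.choose i * r.choose i := by
  classical
  rw [targetSet, Finset.card_biUnion]
  · have hcard : ∀ S : Finset (Fin n),
        (({S} : Finset (Finset (Fin n))) ×ˢ sgnSet n S ×ˢ
          Finset.powersetCard S.card (Finset.range r)).card = 2 ^ S.card * r.choose S.card := by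
      intro S
      rw [Finset.card_product, Finset.card_product, Finset.card_singleton, one_mul,
        card_sgnSet, Finset.card_powersetCard, Finset.card_range]
    rw [Finset.sum_congr rfl (fun S _ => hcard S)]
    have := Finset.sum_powerset_apply_card (x := (Finset.univ : Finset (Fin n)))
      (fun k => 2 ^ k * r.choose k)
    rw [Finset.powerset_univ] at this
    rw [this, Finset.card_univ, Fintype.card_fin]
    refine Finset.sum_congr rfl fun i _ => ?_
    rw [smul_eq_mul]; ring
  · intro S _ S' _ hne
    rw [Function.onFun, Finset.disjoint_left]
    intro p hp hp'
    rw [Finset.mem_product] at hp hp'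
    exact hne (by rw [← Finset.mem_singleton.mp hp.1, ← Finset.mem_singleton.mp hp'.1])

theorem leeVol_upper_bound (m n r : ℕ) [NeZero m] (hm : 2 ≤ m) (hn : 1 ≤ n)
    (hr1 : 1 ≤ r) (hr2 : r ≤ n * (m / 2)) :
    leeVol m n r ≤ ∑ i ∈ Finset.range (n + 1), 2 ^ i * n.choose i * r.choose i := by
  rw [leeVol, ← card_target n r]
  exact Finset.card_le_card_of_injOn (Phi m n)
    (fun y hy => Phi_mem_target hr1 hy) ((Phi_injective m n).injOn)
end

section
/- Let W(t,ℓ) denote the common size of the intersection of two Lee balls of radius t in Z_m^n whose centers are at Lee distance ℓ, realized with centers 0 and (1^ℓ 0^{n-ℓ}). Then for 1 ≤ ℓ ≤ min(2t, n⌊m/2⌋ - 1), W(t, ℓ+1) ≤ W(t, ℓ). -/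
open Finset

/-- The vector (1^ℓ 0^(n-ℓ)). -/
def oneVec (m n ℓ : ℕ) : Fin n → ZMod m := fun i => if (i : ℕ) < ℓ then 1 else 0

/-- W(t,ℓ): the intersection of two radius-t Lee balls with centers 0 and (1^ℓ 0^(n-ℓ)). -/
def W (m n : ℕ) [NeZero m] (t ℓ : ℕ) : ℕ :=
  ((leeBall m n t 0) ∩ (leeBall m n t (oneVec m n ℓ))).card

/-- The key one-dimensional inequality. -/
lemma oneD (m : ℕ) [NeZero m] (t D₁ D₂ : ℕ) :
    (univ.filter (fun z : ZMod m => leeWt m z + D₁ ≤ t ∧ leeWt m (z - 1) + D₂ ≤ t)).card ≤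
    (univ.filter (fun z : ZMod m => leeWt m z + D₁ ≤ t ∧ leeWt m z + D₂ ≤ t)).card := by
  rcases le_total D₂ D₁ with h | h
  · have heq : (univ.filter (fun z : ZMod m => leeWt m z + D₁ ≤ t ∧ leeWt m z + D₂ ≤ t)) =
        univ.filter (fun z : ZMod m => leeWt m z + D₁ ≤ t) := by
      ext z
      simp only [mem_filter, mem_univ, true_and]
      omega
    rw [heq]
    apply card_le_card
    intro z hz
    simp only [mem_filter, mem_univ, true_and] at hz ⊢
    exact hz.1
  · have heq : (univ.filter (fun z : ZMod m => leeWt m z + D₁ ≤ t ∧ leeWt m z + D₂ ≤ t)) =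
        univ.filter (fun z : ZMod m => leeWt m z + D₂ ≤ t) := by
      ext z
      simp only [mem_filter, mem_univ, true_and]
      omega
    rw [heq]
    have hle : (univ.filter (fun z : ZMod m =>
        leeWt m z + D₁ ≤ t ∧ leeWt m (z - 1) + D₂ ≤ t)).card ≤
        (univ.filter (fun z : ZMod m => leeWt m (z - 1) + D₂ ≤ t)).card := by
      apply card_le_card
      intro z hz
      simp only [mem_filter, mem_univ, true_and] at hz ⊢
      exact hz.2
    have hcard : (univ.filter (fun z : ZMod m => leeWt m (z - 1) + D₂ ≤ t)).card =
        (univ.filter (fun z : ZMod m => leeWt m z + D₂ ≤ t)).card := by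
      refine card_bij' (fun z _ => z - 1) (fun z _ => z + 1) ?_ ?_ ?_ ?_ <;>
        intro z hz <;>
        simp only [mem_filter, mem_univ, true_and, sub_add_cancel,
          add_sub_cancel_right] at hz ⊢ <;>
        first
          | exact hz
          | simpa using hz
          | rfl
    omega

/-- Fiber over `y` (with `y j = 0`) of the intersection of two Lee balls,
sliced by the map `x ↦ Function.update x j 0`. -/
lemma fiber_card (m n : ℕ) [NeZero m] (t : ℕ) (c₁ c₂ : Fin n → ZMod m) (j : Fin n)
    (y : Fin n → ZMod m) (hy : y j = 0) :
    ((leeBall m n t c₁ ∩ leeBall m n t c₂).filter (fun x => Function.update x j 0 = y)).card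
    = (univ.filter (fun z : ZMod m =>
        leeWt m (z - c₁ j) + ∑ i ∈ univ.erase j, leeWt m (y i - c₁ i) ≤ t ∧
        leeWt m (z - c₂ j) + ∑ i ∈ univ.erase j, leeWt m (y i - c₂ i) ≤ t)).card := by
  have key : ∀ (x : Fin n → ZMod m), Function.update x j 0 = y →
      ∀ c : Fin n → ZMod m, leeDist m n x c
        = leeWt m (x j - c j) + ∑ i ∈ univ.erase j, leeWt m (y i - c i) := by
    intro x hx c
    have hxy : ∀ i : Fin n, i ≠ j → x i = y i := by
      intro i hi
      rw [← hx, Function.update_of_ne hi]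
    unfold leeDist leeWtV
    rw [← Finset.add_sum_erase _ _ (mem_univ j)]
    congr 1
    apply Finset.sum_congr rfl
    intro i hi
    rw [Pi.sub_apply, hxy i (Finset.ne_of_mem_erase hi)]
  apply card_bij' (fun x _ => x j) (fun z _ => Function.update y j z)
  · intro x hx
    simp only [mem_filter, mem_inter, mem_univ, true_and] at hx ⊢
    obtain ⟨⟨h1, h2⟩, hupd⟩ := hx
    unfold leeBall at h1 h2
    simp only [mem_filter, mem_univ, true_and] at h1 h2
    rw [key x hupd c₁] at h1
    rw [key x hupd c₂] at h2
    exact ⟨h1, h2⟩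
  · intro z hz
    simp only [mem_filter, mem_univ, true_and] at hz ⊢
    have hupd : Function.update (Function.update y j z) j 0 = y := by
      rw [Function.update_idem]
      funext i
      by_cases hi : i = j
      · subst hi; rw [Function.update_self, hy]
      · rw [Function.update_of_ne hi]
    refine ⟨Finset.mem_inter.mpr ⟨?_, ?_⟩, hupd⟩
    · unfold leeBall
      simp only [mem_filter, mem_univ, true_and]
      rw [key _ hupd]
      simpa [Function.update_self] using hz.1
    · unfold leeBall
      simp only [mem_filter, mem_univ, true_and]
      rw [key _ hupd]
      simpa [Function.update_self] using hz.2
  · intro x hx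
    simp only [mem_filter] at hx
    funext i
    by_cases hi : i = j
    · subst hi; simp
    · rw [Function.update_of_ne hi, ← hx.2, Function.update_of_ne hi]
  · intro z _
    simp

theorem W_monotone (m n t ℓ : ℕ) [NeZero m] (hm : 2 ≤ m)
    (ht : t ≤ n * (m / 2)) (hl1 : 1 ≤ ℓ) (hl2 : ℓ ≤ min (2 * t) (n * (m / 2) - 1)) :
    W m n t (ℓ + 1) ≤ W m n t ℓ := by
  by_cases hn : ℓ < n
  · set j : Fin n := ⟨ℓ, hn⟩ with hj
    have hcj : oneVec m n ℓ j = 0 := by simp [oneVec, hj]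
    have hc'j : oneVec m n (ℓ + 1) j = 1 := by simp [oneVec, hj]
    have hcc' : ∀ i : Fin n, i ≠ j → oneVec m n (ℓ + 1) i = oneVec m n ℓ i := by
      intro i hi
      have hne : (i : ℕ) ≠ ℓ := by
        intro h
        apply hi
        apply Fin.ext
        simpa [hj] using h
      unfold oneVec
      rcases Nat.lt_or_ge (i : ℕ) ℓ with h | h
      · simp [h, Nat.lt_succ_of_lt h]
      · have h1 : ¬ (i : ℕ) < ℓ := not_lt.mpr h
        have h2 : ¬ (i : ℕ) < ℓ + 1 := by omega
        simp [h1, h2]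
    unfold W
    rw [card_eq_sum_card_fiberwise
        (f := fun x : Fin n → ZMod m => Function.update x j 0) (t := univ)
        (fun x _ => mem_univ _),
      card_eq_sum_card_fiberwise
        (f := fun x : Fin n → ZMod m => Function.update x j 0) (t := univ)
        (fun x _ => mem_univ _)]
    apply Finset.sum_le_sum
    intro y _
    by_cases hy : y j = 0
    · rw [fiber_card m n t 0 (oneVec m n (ℓ + 1)) j y hy,
        fiber_card m n t 0 (oneVec m n ℓ) j y hy]
      have hsum : ∑ i ∈ univ.erase j, leeWt m (y i - oneVec m n (ℓ + 1) i)
          = ∑ i ∈ univ.erase j, leeWt m (y i - oneVec m n ℓ i) := by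
        apply Finset.sum_congr rfl
        intro i hi
        rw [hcc' i (Finset.ne_of_mem_erase hi)]
      rw [hsum, hc'j, hcj]
      simpa [sub_zero] using
        oneD m t (∑ i ∈ univ.erase j, leeWt m (y i - (0 : Fin n → ZMod m) i))
          (∑ i ∈ univ.erase j, leeWt m (y i - oneVec m n ℓ i))
    · have hempty : ((leeBall m n t 0 ∩ leeBall m n t (oneVec m n (ℓ + 1))).filter
          (fun x => Function.update x j 0 = y)) = ∅ := by
        apply Finset.filter_false_of_mem
        intro x _
        intro hupd
        apply hy
        rw [← hupd, Function.update_self]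
      rw [hempty]
      simp
  · have hveq : oneVec m n (ℓ + 1) = oneVec m n ℓ := by
      funext i
      have h1 : (i : ℕ) < ℓ := lt_of_lt_of_le i.isLt (le_of_not_gt hn)
      unfold oneVec
      simp [h1, Nat.lt_succ_of_lt h1]
    unfold W
    rw [hveq]
end

section
/- For the intersection of two Lee balls of radius t in Z_m^n centered at 0 and (1,0,…,0): if m is even, its size equals 2·Σ_{i=1}^{m/2} V(n-1, t-i); if m is odd, its size equals 2·Σ_{i=1}^{(m-1)/2} V(n-1, t-i) + V(n-1, t-(m-1)/2), where V(n-1, s) denotes the Lee ball volume in Z_m^{n-1} of radius s (interpreted as 0 when s < 0). -/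
open Finset

/-- Lee ball volume with integer radius, interpreted as 0 for negative radius. -/
def leeVolZ (m n : ℕ) [NeZero m] (r : ℤ) : ℕ := if r < 0 then 0 else leeVol m n r.toNat

/-- Explicit formula for `max (leeWt j) (leeWt (j-1))` as a function of natural `j < m`. -/
def Gfun (m j : ℕ) : ℕ :=
  if j = 0 then 1 else max (min j (m - j)) (min (j - 1) (m - (j - 1)))

lemma lee_inner_card (m n' t c : ℕ) [NeZero m] :
    ((univ : Finset (Fin n' → ZMod m)).filter fun x => c + leeWtV m n' x ≤ t).card
      = leeVolZ m n' ((t : ℤ) - (c : ℤ)) := by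
  by_cases h : c ≤ t
  · have h0 : ¬ ((t : ℤ) - (c : ℤ) < 0) := by omega
    have h1 : ((t : ℤ) - (c : ℤ)).toNat = t - c := by omega
    rw [leeVolZ, if_neg h0, h1, leeVol, leeBall]
    congr 1
    apply filter_congr
    intro x _
    simp only [leeDist, sub_zero, eq_iff_iff]
    omega
  · have h0 : ((t : ℤ) - (c : ℤ) < 0) := by omega
    rw [leeVolZ, if_pos h0, Finset.card_eq_zero, Finset.filter_eq_empty_iff]
    intro x _
    omega

lemma card_inter_eq_sum (m n' t : ℕ) [NeZero m] :
    ((leeBall m (n' + 1) t 0) ∩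
        (leeBall m (n' + 1) t (fun i => if (i : ℕ) < 1 then 1 else 0))).card
      = ∑ a : ZMod m,
          leeVolZ m n' ((t : ℤ) - (max (leeWt m a) (leeWt m (a - 1)) : ℕ)) := by
  rw [leeBall, leeBall, ← Finset.filter_and, Finset.card_filter]
  have key : ∀ a : ZMod m, ∀ x : Fin n' → ZMod m,
      (leeDist m (n' + 1) (Fin.cons a x) 0 ≤ t ∧
        leeDist m (n' + 1) (Fin.cons a x)
          (fun i : Fin (n' + 1) => if (i : ℕ) < 1 then (1 : ZMod m) else 0) ≤ t)
      ↔ max (leeWt m a) (leeWt m (a - 1)) + leeWtV m n' x ≤ t := by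
    intro a x
    have e1 : (Fin.cons a x - (0 : Fin (n' + 1) → ZMod m)) = Fin.cons a x := sub_zero _
    have e2 : ((Fin.cons a x : Fin (n' + 1) → ZMod m) -
          fun i : Fin (n' + 1) => if (i : ℕ) < 1 then (1 : ZMod m) else 0)
        = Fin.cons (a - 1) x := by
      funext i
      refine Fin.cases ?_ ?_ i
      · simp
      · intro j
        have hj : ¬ ((j.succ : Fin (n' + 1)) : ℕ) < 1 := by simp [Fin.val_succ]
        simp [hj]
    have e3 : ∀ b : ZMod m, leeWtV m (n' + 1) (Fin.cons b x) = leeWt m b + leeWtV m n' x := by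
      intro b
      rw [leeWtV, Fin.sum_univ_succ]
      simp [leeWtV]
    rw [leeDist, leeDist, e1, e2, e3, e3]
    omega
  rw [show (Finset.univ : Finset (Fin (n' + 1) → ZMod m))
        = Finset.univ.image (fun p : ZMod m × (Fin n' → ZMod m) => Fin.cons p.1 p.2) from ?_]
  · rw [Finset.sum_image ?_]
    · rw [Fintype.sum_prod_type]
      refine Finset.sum_congr rfl fun a _ => ?_
      rw [← lee_inner_card m n' t (max (leeWt m a) (leeWt m (a - 1)))]
      rw [Finset.card_filter]
      refine Finset.sum_congr rfl fun x _ => ?_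
      exact if_congr (key a x) rfl rfl
    · intro p _ q _ hpq
      refine Prod.ext ?_ ?_
      · have h1 := congrFun hpq 0
        simpa using h1
      · funext j
        have h2 := congrFun hpq j.succ
        simpa using h2
  · symm
    rw [Finset.eq_univ_iff_forall]
    intro y
    rw [Finset.mem_image]
    exact ⟨(y 0, Fin.tail y), Finset.mem_univ _, Fin.cons_self_tail y⟩

lemma zmod_sum_range (m : ℕ) [NeZero m] (f : ZMod m → ℕ) :
    ∑ a : ZMod m, f a = ∑ j ∈ Finset.range m, f (j : ZMod m) := by
  refine Finset.sum_nbij' (fun a => a.val) (fun j => (j : ZMod m)) ?_ ?_ ?_ ?_ ?_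
  · intro a _; exact Finset.mem_range.2 (ZMod.val_lt a)
  · intro j _; exact Finset.mem_univ _
  · intro a _; exact ZMod.natCast_rightInverse a
  · intro j hj; exact ZMod.val_cast_of_lt (Finset.mem_range.1 hj)
  · intro a _
    show f a = f ((a.val : ℕ) : ZMod m)
    rw [ZMod.natCast_rightInverse a]

lemma maxWt_eq_Gfun (m j : ℕ) [NeZero m] (hm : 2 ≤ m) (h : j < m) :
    max (leeWt m (j : ZMod m)) (leeWt m ((j : ZMod m) - 1)) = Gfun m j := by
  rcases Nat.eq_zero_or_pos j with rfl | hj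
  · have hneg : ((0 : ℕ) : ZMod m) - 1 = ((m - 1 : ℕ) : ZMod m) := by
      rw [Nat.cast_sub (by omega : 1 ≤ m), ZMod.natCast_self, Nat.cast_zero, Nat.cast_one]
    rw [hneg, Gfun, if_pos rfl, leeWt, leeWt, Nat.cast_zero, ZMod.val_zero,
      ZMod.val_cast_of_lt (by omega : m - 1 < m)]
    omega
  · have hsub : ((j : ℕ) : ZMod m) - 1 = ((j - 1 : ℕ) : ZMod m) := by
      rw [Nat.cast_sub (by omega : 1 ≤ j), Nat.cast_one]
    rw [hsub, Gfun, if_neg (by omega : ¬ j = 0), leeWt, leeWt,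
      ZMod.val_cast_of_lt h, ZMod.val_cast_of_lt (by omega : j - 1 < m)]

lemma sum_G_even (g : ℕ → ℕ) (m : ℕ) (hm : 2 ≤ m) (he : m % 2 = 0) :
    ∑ j ∈ Finset.range m, g (Gfun m j) = 2 * ∑ i ∈ Finset.Icc 1 (m / 2), g i := by
  obtain ⟨k, rfl⟩ : ∃ k, m = 2 * k := ⟨m / 2, by omega⟩
  have hk : 1 ≤ k := by omega
  have hdiv : 2 * k / 2 = k := by omega
  rw [hdiv, Finset.range_eq_Ico, Finset.sum_eq_sum_Ico_succ_bot (by omega : 0 < 2 * k)]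
  rw [← Finset.sum_Ico_consecutive _ (by omega : 0 + 1 ≤ k + 1) (by omega : k + 1 ≤ 2 * k)]
  have h1 : ∑ j ∈ Finset.Ico (0 + 1) (k + 1), g (Gfun (2 * k) j)
      = ∑ i ∈ Finset.Icc 1 k, g i := by
    rw [show Finset.Icc 1 k = Finset.Ico (0 + 1) (k + 1) by
      rw [Finset.Ico_add_one_right_eq_Icc]]
    refine Finset.sum_congr rfl fun j hj => ?_
    rw [Finset.mem_Ico] at hj
    congr 1
    rw [Gfun, if_neg (by omega)]
    omega
  have h2 : ∑ j ∈ Finset.Ico (k + 1) (2 * k), g (Gfun (2 * k) j)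
      = ∑ i ∈ Finset.Ico 2 (k + 1), g i := by
    refine Finset.sum_nbij' (fun j => 2 * k + 1 - j) (fun i => 2 * k + 1 - i) ?_ ?_ ?_ ?_ ?_
    · intro j hj; simp only [Finset.mem_Ico] at hj ⊢; omega
    · intro i hi; simp only [Finset.mem_Ico] at hi ⊢; omega
    · intro j hj; simp only [Finset.mem_Ico] at hj; omega
    · intro i hi; simp only [Finset.mem_Ico] at hi; omega
    · intro j hj
      simp only [Finset.mem_Ico] at hj
      show g (Gfun (2 * k) j) = g (2 * k + 1 - j)
      congr 1
      rw [Gfun, if_neg (by omega)]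
      omega
  have h0 : Gfun (2 * k) 0 = 1 := by rw [Gfun, if_pos rfl]
  rw [h0, h1, h2]
  have h3 : g 1 + ∑ i ∈ Finset.Ico 2 (k + 1), g i = ∑ i ∈ Finset.Icc 1 k, g i := by
    rw [show Finset.Icc 1 k = Finset.Ico 1 (k + 1) by rw [Finset.Ico_add_one_right_eq_Icc],
      Finset.sum_eq_sum_Ico_succ_bot (by omega : 1 < k + 1)]
  omega

lemma sum_G_odd (g : ℕ → ℕ) (m : ℕ) (hm : 2 ≤ m) (he : m % 2 = 1) :
    ∑ j ∈ Finset.range m, g (Gfun m j)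
      = 2 * ∑ i ∈ Finset.Icc 1 ((m - 1) / 2), g i + g ((m - 1) / 2) := by
  obtain ⟨k, rfl⟩ : ∃ k, m = 2 * k + 1 := ⟨(m - 1) / 2, by omega⟩
  have hk : 1 ≤ k := by omega
  have hdiv : (2 * k + 1 - 1) / 2 = k := by omega
  rw [hdiv, Finset.range_eq_Ico, Finset.sum_eq_sum_Ico_succ_bot (by omega : 0 < 2 * k + 1)]
  rw [← Finset.sum_Ico_consecutive _ (by omega : 0 + 1 ≤ k + 1) (by omega : k + 1 ≤ 2 * k + 1)]
  rw [← Finset.sum_Ico_consecutive _ (by omega : k + 1 ≤ k + 2) (by omega : k + 2 ≤ 2 * k + 1)]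
  have h1 : ∑ j ∈ Finset.Ico (0 + 1) (k + 1), g (Gfun (2 * k + 1) j)
      = ∑ i ∈ Finset.Icc 1 k, g i := by
    rw [show Finset.Icc 1 k = Finset.Ico (0 + 1) (k + 1) by
      rw [Finset.Ico_add_one_right_eq_Icc]]
    refine Finset.sum_congr rfl fun j hj => ?_
    rw [Finset.mem_Ico] at hj
    congr 1
    rw [Gfun, if_neg (by omega)]
    omega
  have hmid : ∑ j ∈ Finset.Ico (k + 1) (k + 2), g (Gfun (2 * k + 1) j) = g k := by
    rw [show Finset.Ico (k + 1) (k + 2) = {k + 1} from Nat.Ico_succ_singleton _,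
      Finset.sum_singleton]
    congr 1
    rw [Gfun, if_neg (by omega)]
    omega
  have h2 : ∑ j ∈ Finset.Ico (k + 2) (2 * k + 1), g (Gfun (2 * k + 1) j)
      = ∑ i ∈ Finset.Ico 2 (k + 1), g i := by
    refine Finset.sum_nbij' (fun j => 2 * k + 2 - j) (fun i => 2 * k + 2 - i) ?_ ?_ ?_ ?_ ?_
    · intro j hj; simp only [Finset.mem_Ico] at hj ⊢; omega
    · intro i hi; simp only [Finset.mem_Ico] at hi ⊢; omega
    · intro j hj; simp only [Finset.mem_Ico] at hj; omega
    · intro i hi; simp only [Finset.mem_Ico] at hi; omega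
    · intro j hj
      simp only [Finset.mem_Ico] at hj
      show g (Gfun (2 * k + 1) j) = g (2 * k + 2 - j)
      congr 1
      rw [Gfun, if_neg (by omega)]
      omega
  have h0 : Gfun (2 * k + 1) 0 = 1 := by rw [Gfun, if_pos rfl]
  rw [h0, h1, hmid, h2]
  have h3 : g 1 + ∑ i ∈ Finset.Ico 2 (k + 1), g i = ∑ i ∈ Finset.Icc 1 k, g i := by
    rw [show Finset.Icc 1 k = Finset.Ico 1 (k + 1) by rw [Finset.Ico_add_one_right_eq_Icc],
      Finset.sum_eq_sum_Ico_succ_bot (by omega : 1 < k + 1)]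
  omega

theorem intersection_dist_one (m n t : ℕ) [NeZero m] (hm : 2 ≤ m) (hn : 2 ≤ n)
    (ht1 : 1 ≤ t) (ht2 : 2 * t ≤ n * (m / 2)) :
    (Even m →
      ((leeBall m n t 0) ∩ (leeBall m n t (fun i => if (i : ℕ) < 1 then 1 else 0))).card =
        2 * ∑ i ∈ Finset.Icc 1 (m / 2), leeVolZ m (n - 1) ((t : ℤ) - (i : ℤ))) ∧
    (Odd m →
      ((leeBall m n t 0) ∩ (leeBall m n t (fun i => if (i : ℕ) < 1 then 1 else 0))).card =
        2 * (∑ i ∈ Finset.Icc 1 ((m - 1) / 2), leeVolZ m (n - 1) ((t : ℤ) - (i : ℤ)))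
          + leeVolZ m (n - 1) ((t : ℤ) - (((m - 1) / 2 : ℕ) : ℤ))) := by
  obtain ⟨n', rfl⟩ : ∃ n', n = n' + 1 := ⟨n - 1, by omega⟩
  have hn' : n' + 1 - 1 = n' := rfl
  rw [hn']
  have main : ((leeBall m (n' + 1) t 0) ∩
      (leeBall m (n' + 1) t (fun i => if (i : ℕ) < 1 then 1 else 0))).card
      = ∑ j ∈ Finset.range m, (fun i : ℕ => leeVolZ m n' ((t : ℤ) - (i : ℤ))) (Gfun m j) := by
    rw [card_inter_eq_sum m n' t,
      zmod_sum_range m (fun a => leeVolZ m n' ((t : ℤ) - (max (leeWt m a) (leeWt m (a - 1)) : ℕ)))]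
    refine Finset.sum_congr rfl fun j hj => ?_
    rw [maxWt_eq_Gfun m j hm (Finset.mem_range.1 hj)]
  constructor
  · intro hEven
    rw [main]
    exact sum_G_even (fun i => leeVolZ m n' ((t : ℤ) - (i : ℤ))) m hm (Nat.even_iff.1 hEven)
  · intro hOdd
    rw [main]
    exact sum_G_odd (fun i => leeVolZ m n' ((t : ℤ) - (i : ℤ))) m hm (Nat.odd_iff.1 hOdd)
end

section
/- For 1 ≤ ℓ ≤ min(2t, n⌊m/2⌋ - 1), the intersection of two Lee balls of radius t in Z_m^n with centers 0 and (1^ℓ 0^{n-ℓ}) has size at most m^ℓ · V(n - ⌈ℓ/2⌉, t - ⌈ℓ/2⌉), where V(n', s) is the Lee ball volume in Z_m^{n'} of radius s. -/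
/-!
Split a word of the intersection into its first `ℓ` coordinates and its tail. On each of the
first `ℓ` coordinates `y` and `y - 1` cannot both vanish, so the Lee weights of `y` and of
`y - c_ℓ` together spend at least `ℓ` there; both weights are at most `t` and share the tail,
hence twice the tail weight is at most `2t - ℓ`. The head is arbitrary (`m ^ ℓ` choices) and the
tail lies in a Lee ball of radius `t - ⌈ℓ/2⌉` in dimension `n - ℓ ≤ n - ⌈ℓ/2⌉`.
For `ℓ > n` the bound is trivial, as `m ^ n ≤ m ^ ℓ`.
-/

open Finset

lemma leeWt_zero (m : ℕ) : leeWt m 0 = 0 := by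
  simp [leeWt]

lemma one_le_leeWt_of_ne_zero (m : ℕ) [NeZero m] {x : ZMod m} (hx : x ≠ 0) : 1 ≤ leeWt m x := by
  have hlt : x.val < m := ZMod.val_lt x
  have hpos : x.val ≠ 0 := by rwa [ne_eq, ZMod.val_eq_zero]
  simp only [leeWt]
  omega

lemma one_le_leeWt_add_leeWt_sub_one (m : ℕ) [NeZero m] (hm : 2 ≤ m) (x : ZMod m) :
    1 ≤ leeWt m x + leeWt m (x - 1) := by
  have : Fact (1 < m) := ⟨hm⟩
  by_cases hx : x = 0
  · have h : x - 1 ≠ 0 := by simp [hx]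
    have := one_le_leeWt_of_ne_zero m h
    omega
  · have := one_le_leeWt_of_ne_zero m hx
    omega

lemma le_leeWtV_add_leeWtV_sub_one (m ℓ : ℕ) [NeZero m] (hm : 2 ≤ m) (x : Fin ℓ → ZMod m) :
    ℓ ≤ leeWtV m ℓ x + leeWtV m ℓ (x - 1) := by
  calc ℓ = ∑ _i : Fin ℓ, 1 := by simp
    _ ≤ ∑ i, (leeWt m (x i) + leeWt m ((x - 1) i)) :=
        sum_le_sum fun i _ => one_le_leeWt_add_leeWt_sub_one m hm (x i)
    _ = _ := sum_add_distrib

lemma leeWtV_append (m a b : ℕ) (x : Fin a → ZMod m) (z : Fin b → ZMod m) :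
    leeWtV m (a + b) (Fin.append x z) = leeWtV m a x + leeWtV m b z := by
  simp [leeWtV, Fin.sum_univ_add]

lemma leeWtV_zero (m n : ℕ) : leeWtV m n 0 = 0 := by
  simp [leeWtV, leeWt_zero]

lemma mem_leeBall_zero (m n t : ℕ) [NeZero m] (y : Fin n → ZMod m) :
    y ∈ leeBall m n t 0 ↔ leeWtV m n y ≤ t := by
  simp [leeBall, leeDist]

lemma oneVec_add_eq_append (m ℓ n : ℕ) : oneVec m (ℓ + n) ℓ = Fin.append 1 0 := by
  ext i
  refine Fin.addCases (fun j => ?_) (fun j => ?_) i <;> simp [oneVec]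

lemma append_sub_append {α : Type*} [Sub α] {a b : ℕ} (x x' : Fin a → α) (z z' : Fin b → α) :
    Fin.append x z - Fin.append x' z' = Fin.append (x - x') (z - z') := by
  ext i
  refine Fin.addCases (fun j => ?_) (fun j => ?_) i <;> simp

lemma leeWtV_tail_le_of_mem_inter (m ℓ n t : ℕ) [NeZero m] (hm : 2 ≤ m)
    (x : Fin ℓ → ZMod m) (z : Fin n → ZMod m)
    (hy : Fin.append x z ∈ leeBall m (ℓ + n) t 0 ∩ leeBall m (ℓ + n) t (oneVec m (ℓ + n) ℓ)) :
    leeWtV m n z ≤ t - (ℓ + 1) / 2 := by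
  obtain ⟨h₀, h₁⟩ := mem_inter.mp hy
  rw [mem_leeBall_zero, leeWtV_append] at h₀
  simp only [leeBall, mem_filter, mem_univ, true_and, leeDist, oneVec_add_eq_append,
    append_sub_append, sub_zero, leeWtV_append] at h₁
  have := le_leeWtV_add_leeWtV_sub_one m ℓ hm x
  omega

lemma leeVol_le_leeVol_of_le (m : ℕ) [NeZero m] {n₁ n₂ : ℕ} (h : n₁ ≤ n₂) (r : ℕ) :
    leeVol m n₁ r ≤ leeVol m n₂ r := by
  obtain ⟨d, rfl⟩ := Nat.exists_eq_add_of_le h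
  refine card_le_card_of_injOn (fun z => Fin.append z 0) (fun z hz => ?_) (fun z _ z' _ he => ?_)
  · simp only [mem_coe, mem_leeBall_zero, leeWtV_append, leeWtV_zero] at hz ⊢
    omega
  · funext i
    simpa using congrFun he (Fin.castAdd d i)

lemma one_le_leeVol (m n r : ℕ) [NeZero m] : 1 ≤ leeVol m n r :=
  card_pos.mpr ⟨0, by simp [mem_leeBall_zero, leeWtV_zero]⟩

lemma card_leeBall_inter_le_of_lt (m n t ℓ : ℕ) [NeZero m] (c : Fin n → ZMod m) (hn : n < ℓ)
    (r s : ℕ) : ((leeBall m n t 0) ∩ (leeBall m n t c)).card ≤ m ^ ℓ * leeVol m r s :=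
  calc _ ≤ (univ : Finset (Fin n → ZMod m)).card := card_le_card (subset_univ _)
    _ = m ^ n := by simp [ZMod.card]
    _ ≤ m ^ ℓ := Nat.pow_le_pow_right (Nat.pos_of_neZero m) hn.le
    _ ≤ _ := Nat.le_mul_of_pos_right _ (one_le_leeVol m r s)

theorem intersection_upper_bound_general (m n t ℓ : ℕ) [NeZero m] (hm : 2 ≤ m) :
    ((leeBall m n t 0) ∩ (leeBall m n t (oneVec m n ℓ))).card ≤
      m ^ ℓ * leeVol m (n - (ℓ + 1) / 2) (t - (ℓ + 1) / 2) := by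
  rcases lt_or_ge n ℓ with hn | hln
  · exact card_leeBall_inter_le_of_lt m n t ℓ _ hn _ _
  obtain ⟨n', rfl⟩ := Nat.exists_eq_add_of_le hln
  set k := (ℓ + 1) / 2
  have hsub : leeBall m (ℓ + n') t 0 ∩ leeBall m (ℓ + n') t (oneVec m (ℓ + n') ℓ) ⊆
      (univ ×ˢ leeBall m n' (t - k) 0).image (fun p => Fin.append p.1 p.2) := by
    intro y hy
    rw [← Fin.append_castAdd_natAdd (f := y)] at hy ⊢
    refine mem_image_of_mem (fun p => Fin.append p.1 p.2)
      (a := (fun i => y (Fin.castAdd n' i), fun i => y (Fin.natAdd ℓ i))) ?_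
    exact mem_product.mpr ⟨mem_univ _,
      (mem_leeBall_zero _ _ _ _).mpr (leeWtV_tail_le_of_mem_inter m ℓ n' t hm _ _ hy)⟩
  calc _ ≤ _ := card_le_card hsub
    _ ≤ _ := card_image_le
    _ = m ^ ℓ * leeVol m n' (t - k) := by simp [card_product, leeVol, ZMod.card]
    _ ≤ _ := Nat.mul_le_mul_left _ (leeVol_le_leeVol_of_le m (by omega) _)

theorem intersection_upper_bound (m n t ℓ : ℕ) [NeZero m] (hm : 2 ≤ m) (hn : 1 ≤ n)
    (ht : 1 ≤ t) (hl1 : 1 ≤ ℓ) (hl2 : ℓ ≤ min (2 * t) (n * (m / 2) - 1)) :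
    ((leeBall m n t 0) ∩ (leeBall m n t (oneVec m n ℓ))).card ≤
      m ^ ℓ * leeVol m (n - (ℓ + 1) / 2) (t - (ℓ + 1) / 2) :=
  intersection_upper_bound_general m n t ℓ hm
end

section
/- Let m, n, t, γ be such that every code C ⊆ Z_m^n (m even) with |C| ≥ m^n / V(n,t) + γ contains at least γ·2n/(m·t) unordered pairs of distinct elements at Lee distance at most 2t from each other. -/
open Finset

lemma leeWt_neg (m : ℕ) [NeZero m] (x : ZMod m) : leeWt m (-x) = leeWt m x := by
  unfold leeWt
  rw [ZMod.neg_val]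
  have hv := ZMod.val_lt x
  have hm := NeZero.pos m
  by_cases h : x = 0 <;> simp [h] <;> omega

lemma leeWt_eq_zero (m : ℕ) [NeZero m] (x : ZMod m) : leeWt m x = 0 ↔ x = 0 := by
  unfold leeWt
  have hv := ZMod.val_lt x
  rw [← ZMod.val_eq_zero]
  omega

lemma leeWt_add_le (m : ℕ) [NeZero m] (x y : ZMod m) :
    leeWt m (x + y) ≤ leeWt m x + leeWt m y := by
  unfold leeWt
  rw [ZMod.val_add]
  have hx := ZMod.val_lt x
  have hy := ZMod.val_lt y
  have hmod : (x.val + y.val) % m = if x.val + y.val < m then x.val + y.val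
      else x.val + y.val - m := by
    split
    · exact Nat.mod_eq_of_lt ‹_›
    · rw [Nat.mod_eq_sub_mod (by omega)]
      exact Nat.mod_eq_of_lt (by omega)
  rw [hmod]
  split <;> omega

lemma leeWt_one (m : ℕ) (hm : 2 ≤ m) : leeWt m 1 = 1 := by
  unfold leeWt
  rw [ZMod.val_one_eq_one_mod, Nat.mod_eq_of_lt (by omega)]
  omega

lemma leeDist_comm (m n : ℕ) [NeZero m] (x y : Fin n → ZMod m) :
    leeDist m n x y = leeDist m n y x := by
  unfold leeDist leeWtV
  refine Finset.sum_congr rfl fun i _ => ?_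
  have : (x - y) i = -((y - x) i) := by simp
  rw [this, leeWt_neg]

lemma leeDist_triangle (m n : ℕ) [NeZero m] (x y z : Fin n → ZMod m) :
    leeDist m n x z ≤ leeDist m n x y + leeDist m n y z := by
  unfold leeDist leeWtV
  rw [← Finset.sum_add_distrib]
  refine Finset.sum_le_sum fun i _ => ?_
  have : (x - z) i = (x - y) i + (y - z) i := by simp
  rw [this]
  exact leeWt_add_le m _ _
lemma mem_leeBall (m n : ℕ) [NeZero m] (t : ℕ) (c y : Fin n → ZMod m) :
    y ∈ leeBall m n t c ↔ leeDist m n y c ≤ t := by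
  simp [leeBall]

lemma leeDist_zero_right (m n : ℕ) [NeZero m] (x : Fin n → ZMod m) :
    leeDist m n x 0 = leeWtV m n x := by
  simp [leeDist]

lemma leeBall_card (m n : ℕ) [NeZero m] (t : ℕ) (c : Fin n → ZMod m) :
    (leeBall m n t c).card = leeVol m n t := by
  unfold leeVol
  apply Finset.card_bij (fun y _ => y - c)
  · intro y hy
    rw [mem_leeBall] at *
    rw [leeDist_zero_right]
    rwa [leeDist] at hy
  · intro a ha b hb h
    simpa using h
  · intro b hb
    refine ⟨b + c, ?_, by simp⟩
    rw [mem_leeBall, leeDist]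
    rw [mem_leeBall, leeDist_zero_right] at hb
    simpa using hb

-- "hyperplane ball": vectors with i-th coord 0 and weight ≤ r
def hball (m n : ℕ) [NeZero m] (i : Fin n) (r : ℕ) : Finset (Fin n → ZMod m) :=
  Finset.univ.filter (fun x => x i = 0 ∧ leeWtV m n x ≤ r)

lemma leeWtV_update (m n : ℕ) [NeZero m] (x : Fin n → ZMod m) (i : Fin n) (a : ZMod m)
    (hx : x i = 0) : leeWtV m n (Function.update x i a) = leeWtV m n x + leeWt m a := by
  have key : ∀ (y : Fin n → ZMod m),
      leeWtV m n y = leeWt m (y i) + ∑ j ∈ Finset.univ.erase i, leeWt m (y j) :=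
    fun y => (Finset.add_sum_erase Finset.univ (fun j => leeWt m (y j)) (Finset.mem_univ i)).symm
  rw [key (Function.update x i a), key x, hx]
  have h0 : leeWt m (0 : ZMod m) = 0 := by simp [leeWt]
  rw [h0, Function.update_self]
  have : ∑ j ∈ Finset.univ.erase i, leeWt m (Function.update x i a j)
      = ∑ j ∈ Finset.univ.erase i, leeWt m (x j) := by
    refine Finset.sum_congr rfl fun j hj => ?_
    rw [Function.update_of_ne (Finset.ne_of_mem_erase hj)]
  rw [this]
  ring

lemma hball_card_eq (m n : ℕ) [NeZero m] (i j : Fin n) (r : ℕ) :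
    (hball m n i r).card = (hball m n j r).card := by
  apply Finset.card_bij (fun x _ => x ∘ (Equiv.swap i j))
  · intro x hx
    simp only [hball, Finset.mem_filter, Finset.mem_univ, true_and] at *
    constructor
    · simpa using hx.1
    · have : leeWtV m n (x ∘ (Equiv.swap i j)) = leeWtV m n x :=
        Equiv.sum_comp (Equiv.swap i j) (fun k => leeWt m (x k))
      rw [this]; exact hx.2
  · intro a _ b _ h
    funext k
    have := congrFun h ((Equiv.swap i j).symm k)
    simpa using this
  · intro b hb
    refine ⟨b ∘ (Equiv.swap i j).symm, ?_, ?_⟩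
    · simp only [hball, Finset.mem_filter, Finset.mem_univ, true_and] at *
      constructor
      · simpa [Equiv.swap_apply_left] using hb.1
      · have : leeWtV m n (b ∘ (Equiv.swap i j).symm) = leeWtV m n b :=
          Equiv.sum_comp (Equiv.swap i j).symm (fun k => leeWt m (b k))
      -- note swap symm = swap
        rw [this]; exact hb.2
    · funext k; simp

lemma slice_card (m n : ℕ) [NeZero m] (ht : 1 ≤ t) (j : Fin n) (a : ZMod m)
    (ha : leeWt m a = 1) :
    ((leeBall m n t 0).filter (fun x => x j = a)).card = (hball m n j (t-1)).card := by
  apply Finset.card_bij (fun x _ => Function.update x j 0)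
  · intro x hx
    simp only [Finset.mem_filter, mem_leeBall, leeDist_zero_right] at hx
    simp only [hball, Finset.mem_filter, Finset.mem_univ, true_and]
    refine ⟨Function.update_self j 0 x, ?_⟩
    have hx2 : x = Function.update (Function.update x j 0) j a := by
      funext k
      by_cases hk : k = j
      · subst hk; simp [hx.2]
      · simp [Function.update_of_ne hk]
    have := leeWtV_update m n (Function.update x j 0) j a (Function.update_self j 0 x)
    rw [← hx2, ha] at this
    omega
  · intro x hx y hy h
    simp only [Finset.mem_filter] at hx hy
    funext k
    by_cases hk : k = j
    · subst hk; rw [hx.2, hy.2]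
    · have := congrFun h k
      simpa [Function.update_of_ne hk] using this
  · intro b hb
    simp only [hball, Finset.mem_filter, Finset.mem_univ, true_and] at hb
    refine ⟨Function.update b j a, ?_, ?_⟩
    · simp only [Finset.mem_filter, mem_leeBall, leeDist_zero_right]
      refine ⟨?_, Function.update_self j a b⟩
      have := leeWtV_update m n b j a hb.1
      rw [this, ha]
      omega
    · funext k
      by_cases hk : k = j
      · subst hk; simp [hb.1]
      · simp [Function.update_of_ne hk]

lemma count_lemma (m n t : ℕ) [NeZero m] (hm : 3 ≤ m) (ht : 1 ≤ t) (i : Fin n) :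
    2 * n * (hball m n i (t-1)).card ≤ t * leeVol m n t := by
  have hm2 : 2 ≤ m := by omega
  have h1 : leeWt m (1 : ZMod m) = 1 := leeWt_one m hm2
  have hneg1 : leeWt m (-1 : ZMod m) = 1 := by rw [leeWt_neg]; exact h1
  have hne : (1 : ZMod m) ≠ -1 := by
    intro h
    have hv1 : (1 : ZMod m).val = 1 := by
      rw [ZMod.val_one_eq_one_mod, Nat.mod_eq_of_lt (by omega)]
    have h10 : (1 : ZMod m) ≠ 0 := by
      intro h0
      rw [h0, ZMod.val_zero] at hv1
      omega
    have hvn : (-1 : ZMod m).val = m - 1 := by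
      rw [ZMod.neg_val]
      simp [h10, hv1]
    rw [h] at hv1
    omega
  -- per coordinate, count elements of the ball with x j ∈ {1, -1}
  have key : ∀ j : Fin n, 2 * (hball m n i (t-1)).card
      = ((leeBall m n t 0).filter (fun x => x j = 1 ∨ x j = -1)).card := by
    intro j
    rw [Finset.filter_or, Finset.card_union_of_disjoint]
    · rw [slice_card m n ht j 1 h1, slice_card m n ht j (-1) hneg1,
        hball_card_eq m n i j]
      ring
    · rw [Finset.disjoint_filter]
      intro x _ hx1 hx2
      rw [hx1] at hx2
      exact hne hx2
  have sum_eq : ∑ _j : Fin n, 2 * (hball m n i (t-1)).card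
      = ∑ x ∈ leeBall m n t 0, (Finset.univ.filter (fun j => x j = 1 ∨ x j = -1)).card := by
    calc ∑ _j : Fin n, 2 * (hball m n i (t-1)).card
        = ∑ j : Fin n, ((leeBall m n t 0).filter (fun x => x j = 1 ∨ x j = -1)).card :=
          Finset.sum_congr rfl fun j _ => key j
      _ = ∑ j : Fin n, ∑ x ∈ leeBall m n t 0, if x j = 1 ∨ x j = -1 then 1 else 0 :=
          Finset.sum_congr rfl fun j _ => Finset.card_filter _ _
      _ = ∑ x ∈ leeBall m n t 0, ∑ j : Fin n, if x j = 1 ∨ x j = -1 then 1 else 0 :=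
          Finset.sum_comm
      _ = _ := Finset.sum_congr rfl fun x _ => (Finset.card_filter _ _).symm
  have bound : ∀ x ∈ leeBall m n t 0,
      (Finset.univ.filter (fun j => x j = 1 ∨ x j = -1)).card ≤ t := by
    intro x hx
    rw [mem_leeBall, leeDist_zero_right] at hx
    calc (Finset.univ.filter (fun j => x j = 1 ∨ x j = -1)).card
        = ∑ j ∈ Finset.univ.filter (fun j => x j = 1 ∨ x j = -1), 1 := by simp
      _ ≤ ∑ j ∈ Finset.univ.filter (fun j => x j = 1 ∨ x j = -1), leeWt m (x j) := by
          refine Finset.sum_le_sum fun j hj => ?_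
          rw [Finset.mem_filter] at hj
          rcases hj.2 with h | h
          · rw [h, h1]
          · rw [h, hneg1]
      _ ≤ ∑ j : Fin n, leeWt m (x j) := by
          exact Finset.sum_le_sum_of_subset (Finset.filter_subset _ _)
      _ ≤ t := hx
  have : ∑ _j : Fin n, 2 * (hball m n i (t-1)).card ≤ t * leeVol m n t := by
    rw [sum_eq]
    calc ∑ x ∈ leeBall m n t 0, (Finset.univ.filter (fun j => x j = 1 ∨ x j = -1)).card
        ≤ ∑ _x ∈ leeBall m n t 0, t := Finset.sum_le_sum bound
      _ = t * leeVol m n t := by rw [Finset.sum_const, leeVol]; ring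
  simpa [Finset.sum_const, mul_comm, mul_assoc, mul_left_comm] using this

lemma inter_card_le (m n t : ℕ) [NeZero m] (ht : 1 ≤ t) (y z : Fin n → ZMod m)
    (i : Fin n) (hi : y i ≠ z i) :
    (leeBall m n t y ∩ leeBall m n t z).card ≤ m * (hball m n i (t-1)).card := by
  classical
  have hcard : ((Finset.univ : Finset (ZMod m)) ×ˢ hball m n i (t-1)).card
      = m * (hball m n i (t-1)).card := by
    rw [Finset.card_product, Finset.card_univ, ZMod.card]
  rw [← hcard]
  apply Finset.card_le_card_of_injOn
    (fun x => (x i, Function.update (x - (if x i = y i then z else y)) i 0))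
  · intro x hx
    rw [Finset.mem_coe, Finset.mem_inter, mem_leeBall, mem_leeBall] at hx
    set w : Fin n → ZMod m := if x i = y i then z else y with hw
    have hxw : x i ≠ w i := by
      rw [hw]
      split
      · rename_i h; rw [h]; exact hi
      · assumption
    have hdw : leeWtV m n (x - w) ≤ t := by
      rw [hw]
      split
      · exact hx.2
      · exact hx.1
    have hne0 : (x - w) i ≠ 0 := by
      simp only [Pi.sub_apply, sub_ne_zero]
      exact hxw
    have hwt1 : 1 ≤ leeWt m ((x - w) i) := by
      rcases Nat.eq_zero_or_pos (leeWt m ((x - w) i)) with h | h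
      · exact absurd ((leeWt_eq_zero m _).mp h) hne0
      · exact h
    have heq : x - w = Function.update (Function.update (x - w) i 0) i ((x - w) i) := by
      funext k
      by_cases hk : k = i
      · subst hk; simp
      · simp [Function.update_of_ne hk]
    have hupd := leeWtV_update m n (Function.update (x - w) i 0) i ((x - w) i)
      (Function.update_self i 0 (x - w))
    rw [← heq] at hupd
    rw [Finset.mem_coe, Finset.mem_product]
    refine ⟨Finset.mem_univ _, ?_⟩
    simp only [hball, Finset.mem_filter, Finset.mem_univ, true_and]
    exact ⟨Function.update_self i 0 _, by
      show leeWtV m n (Function.update (x - w) i 0) ≤ t - 1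
      omega⟩
  · intro x1 hx1 x2 hx2 h
    simp only [Prod.mk.injEq] at h
    have hii : x1 i = x2 i := h.1
    have hwsame : (if x1 i = y i then z else y) = (if x2 i = y i then z else y) := by
      rw [hii]
    funext k
    by_cases hk : k = i
    · subst hk; exact hii
    · have := congrFun h.2 k
      rw [Function.update_of_ne hk, Function.update_of_ne hk, ← hwsame] at this
      have : x1 k - (if x1 i = y i then z else y) k
           = x2 k - (if x1 i = y i then z else y) k := this
      exact sub_left_injective this

lemma inter_bound (m n t : ℕ) [NeZero m] (hm : 3 ≤ m) (ht : 1 ≤ t)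
    (y z : Fin n → ZMod m) (hyz : y ≠ z) :
    2 * n * (leeBall m n t y ∩ leeBall m n t z).card ≤ m * t * leeVol m n t := by
  obtain ⟨i, hi⟩ : ∃ i, y i ≠ z i := by
    by_contra h
    push_neg at h
    exact hyz (funext h)
  calc 2 * n * (leeBall m n t y ∩ leeBall m n t z).card
      ≤ 2 * n * (m * (hball m n i (t-1)).card) :=
        Nat.mul_le_mul_left _ (inter_card_le m n t ht y z i hi)
    _ = m * (2 * n * (hball m n i (t-1)).card) := by ring
    _ ≤ m * (t * leeVol m n t) := Nat.mul_le_mul_left _ (count_lemma m n t hm ht i)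
    _ = m * t * leeVol m n t := by ring

lemma pw_ineq (k : ℕ) : (k : ℝ) - 1 ≤ ((k * k - k : ℕ) : ℝ) / 2 := by
  have hle : k ≤ k * k := by nlinarith
  rw [Nat.cast_sub hle]
  match k with
  | 0 => norm_num
  | 1 => norm_num
  | (j+2) =>
    push_cast
    have : (0:ℝ) ≤ (j:ℝ) := Nat.cast_nonneg j
    nlinarith

theorem supersaturation_small (m n t : ℕ) (γ : ℝ) [NeZero m] (hm : 4 ≤ m) (he : Even m)
    (hn : 2 ≤ n) (ht1 : 1 ≤ t) (ht2 : t ≤ n * (m / 2)) (hγ : 0 < γ)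
    (C : Finset (Fin n → ZMod m))
    (hC : (m : ℝ) ^ n / (leeVol m n t : ℝ) + γ ≤ (C.card : ℝ)) :
    γ * (2 * n) / ((m : ℝ) * t) ≤
      (((C ×ˢ C).filter (fun p => p.1 ≠ p.2 ∧ leeDist m n p.1 p.2 ≤ 2 * t)).card : ℝ) / 2 := by
  classical
  set V := leeVol m n t with hV
  set P := (C ×ˢ C).filter (fun p => p.1 ≠ p.2 ∧ leeDist m n p.1 p.2 ≤ 2 * t) with hP
  set K : (Fin n → ZMod m) → Finset (Fin n → ZMod m) :=
    fun x => C.filter (fun y => leeDist m n y x ≤ t) with hK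
  -- (S1)
  have S1 : ∑ x : Fin n → ZMod m, (K x).card = C.card * V := by
    calc ∑ x : Fin n → ZMod m, (K x).card
        = ∑ x : Fin n → ZMod m, ∑ y ∈ C, if leeDist m n y x ≤ t then 1 else 0 :=
          Finset.sum_congr rfl fun x _ => Finset.card_filter _ _
      _ = ∑ y ∈ C, ∑ x : Fin n → ZMod m, if leeDist m n y x ≤ t then 1 else 0 :=
          Finset.sum_comm
      _ = ∑ y ∈ C, (leeBall m n t y).card := by
          refine Finset.sum_congr rfl fun y _ => ?_
          rw [← Finset.card_filter]
          congr 1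
          ext x
          simp [mem_leeBall, leeDist_comm m n y x]
      _ = C.card * V := by
          rw [Finset.sum_congr rfl fun y _ => leeBall_card m n t y]
          rw [Finset.sum_const, smul_eq_mul]
  -- (S2+S3)
  have S2 : 2 * n * (∑ x : Fin n → ZMod m, ((K x).offDiag).card) ≤ P.card * (m * t * V) := by
    have hswap : ∑ x : Fin n → ZMod m, ((K x).offDiag).card
        = ∑ p ∈ C ×ˢ C, (Finset.univ.filter
            (fun x : Fin n → ZMod m =>
              p.1 ≠ p.2 ∧ leeDist m n p.1 x ≤ t ∧ leeDist m n p.2 x ≤ t)).card := by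
      calc ∑ x : Fin n → ZMod m, ((K x).offDiag).card
          = ∑ x : Fin n → ZMod m, ∑ p ∈ C ×ˢ C,
              if p.1 ≠ p.2 ∧ leeDist m n p.1 x ≤ t ∧ leeDist m n p.2 x ≤ t then 1 else 0 := by
            refine Finset.sum_congr rfl fun x _ => ?_
            rw [← Finset.card_filter]
            congr 1
            ext p
            simp only [Finset.mem_offDiag, hK, Finset.mem_filter, Finset.mem_product]
            tauto
        _ = ∑ p ∈ C ×ˢ C, ∑ x : Fin n → ZMod m,
              if p.1 ≠ p.2 ∧ leeDist m n p.1 x ≤ t ∧ leeDist m n p.2 x ≤ t then 1 else 0 :=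
            Finset.sum_comm
        _ = _ := Finset.sum_congr rfl fun p _ => (Finset.card_filter _ _).symm
    have hrestrict : ∑ p ∈ C ×ˢ C, (Finset.univ.filter
            (fun x : Fin n → ZMod m =>
              p.1 ≠ p.2 ∧ leeDist m n p.1 x ≤ t ∧ leeDist m n p.2 x ≤ t)).card
        = ∑ p ∈ P, (Finset.univ.filter
            (fun x : Fin n → ZMod m =>
              p.1 ≠ p.2 ∧ leeDist m n p.1 x ≤ t ∧ leeDist m n p.2 x ≤ t)).card := by
      rw [hP]
      symm
      apply Finset.sum_filter_of_ne
      intro p hp hne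
      obtain ⟨x, hx⟩ := Finset.card_pos.mp (Nat.pos_of_ne_zero hne)
      rw [Finset.mem_filter] at hx
      obtain ⟨-, h1, h2, h3⟩ := hx
      refine ⟨h1, ?_⟩
      calc leeDist m n p.1 p.2 ≤ leeDist m n p.1 x + leeDist m n x p.2 :=
            leeDist_triangle m n p.1 x p.2
        _ ≤ t + t := add_le_add h2 (by rwa [leeDist_comm])
        _ = 2 * t := by ring
    have hper : ∀ p ∈ P, 2 * n * (Finset.univ.filter
            (fun x : Fin n → ZMod m =>
              p.1 ≠ p.2 ∧ leeDist m n p.1 x ≤ t ∧ leeDist m n p.2 x ≤ t)).card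
          ≤ m * t * V := by
      intro p hp
      rw [hP, Finset.mem_filter] at hp
      obtain ⟨-, hne, hd⟩ := hp
      have heqset : Finset.univ.filter
            (fun x : Fin n → ZMod m =>
              p.1 ≠ p.2 ∧ leeDist m n p.1 x ≤ t ∧ leeDist m n p.2 x ≤ t)
          = leeBall m n t p.1 ∩ leeBall m n t p.2 := by
        ext x
        simp only [Finset.mem_filter, Finset.mem_univ, true_and, Finset.mem_inter,
          mem_leeBall]
        rw [leeDist_comm m n x p.1, leeDist_comm m n x p.2]
        tauto
      rw [heqset]
      exact inter_bound m n t (by omega) ht1 p.1 p.2 hne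
    calc 2 * n * (∑ x : Fin n → ZMod m, ((K x).offDiag).card)
        = ∑ p ∈ P, 2 * n * (Finset.univ.filter
            (fun x : Fin n → ZMod m =>
              p.1 ≠ p.2 ∧ leeDist m n p.1 x ≤ t ∧ leeDist m n p.2 x ≤ t)).card := by
          rw [hswap, hrestrict, Finset.mul_sum]
      _ ≤ ∑ _p ∈ P, m * t * V := Finset.sum_le_sum hper
      _ = P.card * (m * t * V) := by rw [Finset.sum_const, smul_eq_mul]
  -- positivity facts
  have hVpos : 0 < V := by
    rw [hV, leeVol]
    apply Finset.card_pos.mpr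
    exact ⟨0, by simp [mem_leeBall, leeDist, leeWtV, leeWt]⟩
  have hVr : (0:ℝ) < V := by exact_mod_cast hVpos
  have hmr : (0:ℝ) < m := by positivity
  have htr : (0:ℝ) < t := by exact_mod_cast ht1
  have hnr : (0:ℝ) < n := by exact_mod_cast (by omega : 0 < n)
  -- from hC
  have hC2 : (m:ℝ)^n + γ * V ≤ (C.card : ℝ) * V := by
    have := mul_le_mul_of_nonneg_right hC (le_of_lt hVr)
    calc (m:ℝ)^n + γ * V = ((m:ℝ)^n / V + γ) * V := by field_simp
      _ ≤ (C.card : ℝ) * V := this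
  -- card of whole space
  have hspace : (Fintype.card (Fin n → ZMod m) : ℝ) = (m:ℝ)^n := by
    rw [Fintype.card_fun, ZMod.card, Fintype.card_fin]
    push_cast
    ring
  -- γ V ≤ sum (k - 1)
  have hstep1 : γ * V ≤ ∑ x : Fin n → ZMod m, (((K x).card : ℝ) - 1) := by
    rw [Finset.sum_sub_distrib, Finset.sum_const, Finset.card_univ, nsmul_eq_mul, mul_one,
      hspace]
    have : (↑(∑ x : Fin n → ZMod m, (K x).card) : ℝ) = (C.card : ℝ) * V := by
      rw [S1]; push_cast; ring
    rw [← Nat.cast_sum] at *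
    rw [this]
    linarith
  -- sum (k-1) ≤ sum offdiag /2
  have hstep2 : ∑ x : Fin n → ZMod m, (((K x).card : ℝ) - 1)
      ≤ (↑(∑ x : Fin n → ZMod m, ((K x).offDiag).card) : ℝ) / 2 := by
    rw [Nat.cast_sum, Finset.sum_div]
    refine Finset.sum_le_sum fun x _ => ?_
    rw [Finset.offDiag_card]
    exact pw_ineq (K x).card
  -- combine with S2
  have hstep3 : (↑(∑ x : Fin n → ZMod m, ((K x).offDiag).card) : ℝ)
      ≤ (P.card : ℝ) * (m * t * V) / (2 * n) := by
    rw [le_div_iff₀ (by positivity)]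
    have h2 : ((2 * n * (∑ x : Fin n → ZMod m, ((K x).offDiag).card) : ℕ) : ℝ)
        ≤ ((P.card * (m * t * V) : ℕ) : ℝ) := by exact_mod_cast S2
    push_cast at h2 ⊢
    linarith
  have final : γ * V ≤ (P.card : ℝ) * (m * t * V) / (4 * n) := by
    calc γ * V ≤ (↑(∑ x : Fin n → ZMod m, ((K x).offDiag).card) : ℝ) / 2 :=
          le_trans hstep1 hstep2
      _ ≤ (P.card : ℝ) * (m * t * V) / (2 * n) / 2 := by linarith
      _ = (P.card : ℝ) * (m * t * V) / (4 * n) := by ring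
  rw [div_le_div_iff₀ (by positivity) (by norm_num)]
  rw [le_div_iff₀ (by positivity)] at final
  have hP0 : (0:ℝ) ≤ (P.card : ℝ) := Nat.cast_nonneg _
  nlinarith [final, hVr, mul_pos (mul_pos hmr htr) hVr]
end

section
/- For a linear code C ⊆ Z_p^n of dimension k chosen uniformly at random, the probability that its minimum Lee distance is at most 2t is at most (V(n,2t) - 1)·gauss(n-1,k-1)_p / gauss(n,k)_p; equivalently the density of dimension-k codes with minimum Lee distance ≥ 2t+1 is at least 1 - (V(n,2t)-1)·gauss(n-1,k-1)_p / gauss(n,k)_p. -/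
set_option synthInstance.maxHeartbeats 1000000
set_option maxHeartbeats 1000000

noncomputable def leeVol' (m n r : ℕ) : ℕ := Nat.card {y : Fin n → ZMod m // leeWtV m n y ≤ r}

/-- The Gaussian binomial coefficient: the number of b-dimensional subspaces of `(ZMod p)^a`. -/
noncomputable def gauss (p a b : ℕ) : ℕ :=
  Nat.card {S : Submodule (ZMod p) (Fin a → ZMod p) // Module.finrank (ZMod p) S = b}

open Module Submodule

instance instFinSub (p n : ℕ) [NeZero p] : Finite (Submodule (ZMod p) (Fin n → ZMod p)) :=
  Finite.of_injective (fun S => (S : Set (Fin n → ZMod p))) SetLike.coe_injective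

theorem card_contain_le (p : ℕ) [Fact p.Prime] (n k : ℕ)
    (x : Fin n → ZMod p) (hx : x ≠ 0) :
    Nat.card {C : Submodule (ZMod p) (Fin n → ZMod p) //
        finrank (ZMod p) C = k ∧ x ∈ C} ≤ gauss p (n-1) (k-1) := by
  have hq : finrank (ZMod p) ((Fin n → ZMod p) ⧸ Submodule.span (ZMod p) {x}) = n - 1 := by
    have h1 := Submodule.finrank_quotient_add_finrank (Submodule.span (ZMod p) {x})
    rw [finrank_span_singleton hx] at h1
    have h2 : finrank (ZMod p) (Fin n → ZMod p) = n := by simp [Module.finrank_pi]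
    omega
  have e : ((Fin n → ZMod p) ⧸ Submodule.span (ZMod p) {x}) ≃ₗ[ZMod p] (Fin (n-1) → ZMod p) :=
    LinearEquiv.ofFinrankEq _ _ (by simp [hq, Module.finrank_pi])
  have key : ∀ C : Submodule (ZMod p) (Fin n → ZMod p), finrank (ZMod p) C = k → x ∈ C →
      finrank (ZMod p) ((C.map (Submodule.span (ZMod p) {x}).mkQ).map
        e.toLinearMap) = k - 1 := by
    intro C hC hxC
    have hNC : Submodule.span (ZMod p) {x} ≤ C := by
      rwa [Submodule.span_singleton_le_iff_mem]
    rw [LinearEquiv.finrank_map_eq e]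
    set g : C →ₗ[ZMod p] (Fin n → ZMod p) ⧸ Submodule.span (ZMod p) {x} :=
      (Submodule.span (ZMod p) {x}).mkQ.comp C.subtype with hg
    have hrange : LinearMap.range g = C.map (Submodule.span (ZMod p) {x}).mkQ := by
      rw [hg, LinearMap.range_comp, Submodule.range_subtype]
    have hker : LinearMap.ker g = Submodule.comap C.subtype (Submodule.span (ZMod p) {x}) := by
      rw [hg, LinearMap.ker_comp, Submodule.ker_mkQ]
    have hrn := LinearMap.finrank_range_add_finrank_ker g
    rw [hrange, hker, hC] at hrn
    have heq : finrank (ZMod p) (Submodule.comap C.subtype (Submodule.span (ZMod p) {x})) = 1 := by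
      rw [LinearEquiv.finrank_eq (Submodule.comapSubtypeEquivOfLe hNC),
        finrank_span_singleton hx]
    omega
  apply Nat.card_le_card_of_injective
    (f := fun C : {C : Submodule (ZMod p) (Fin n → ZMod p) // finrank (ZMod p) C = k ∧ x ∈ C} =>
      (⟨(C.1.map (Submodule.span (ZMod p) {x}).mkQ).map e.toLinearMap,
        key C.1 C.2.1 C.2.2⟩ : {S : Submodule (ZMod p) (Fin (n-1) → ZMod p) //
          finrank (ZMod p) S = k - 1}))
  intro C1 C2 h
  simp only [Subtype.mk.injEq] at h
  have h2 := Submodule.map_injective_of_injective e.injective h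
  have hcm : ∀ C : Submodule (ZMod p) (Fin n → ZMod p), x ∈ C →
      Submodule.comap (Submodule.span (ZMod p) {x}).mkQ
        (C.map (Submodule.span (ZMod p) {x}).mkQ) = C := by
    intro C hxC
    rw [Submodule.comap_map_eq, Submodule.ker_mkQ, sup_eq_left,
      Submodule.span_singleton_le_iff_mem]
    exact hxC
  have h3 := congrArg (Submodule.comap (Submodule.span (ZMod p) {x}).mkQ) h2
  rw [hcm C1.1 C1.2.2, hcm C2.1 C2.2.2] at h3
  exact Subtype.ext h3

theorem gauss_pos (p : ℕ) [Fact p.Prime] (n k : ℕ) (hkn : k ≤ n) : 0 < gauss p n k := by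
  have hn : k ≤ finrank (ZMod p) (Fin n → ZMod p) := by
    simpa [Module.finrank_pi] using hkn
  obtain ⟨f, hf⟩ := exists_linearIndependent_of_le_finrank hn
  have : Nonempty {S : Submodule (ZMod p) (Fin n → ZMod p) // finrank (ZMod p) S = k} :=
    ⟨⟨Submodule.span (ZMod p) (Set.range f), by simpa using finrank_span_eq_card hf⟩⟩
  exact Nat.card_pos

theorem density_lower_bound_linear (p n k t : ℕ) [Fact p.Prime]
    (hk1 : 1 ≤ k) (hkn : k ≤ n) (ht : 1 ≤ t) :
    1 - ((leeVol' p n (2 * t) : ℝ) - 1) * (gauss p (n - 1) (k - 1) : ℝ) / (gauss p n k : ℝ) ≤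
      (Nat.card {C : Submodule (ZMod p) (Fin n → ZMod p) //
          Module.finrank (ZMod p) C = k ∧ ∀ x ∈ C, x ≠ 0 → 2 * t + 1 ≤ leeWtV p n x} : ℝ) /
        (gauss p n k : ℝ) := by
  classical
  have hp : p.Prime := Fact.out
  haveI : NeZero p := ⟨hp.ne_zero⟩
  set P : Submodule (ZMod p) (Fin n → ZMod p) → Prop := fun C => finrank (ZMod p) C = k with hP
  set Q : Submodule (ZMod p) (Fin n → ZMod p) → Prop :=
    fun C => ∀ x ∈ C, x ≠ 0 → 2 * t + 1 ≤ leeWtV p n x with hQ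
  have hg : (0:ℝ) < (gauss p n k : ℝ) := by exact_mod_cast gauss_pos p n k hkn
  -- split: card of all = good + bad
  have hsplit : gauss p n k =
      Nat.card {C // P C ∧ Q C} + Nat.card {C // P C ∧ ¬ Q C} := by
    rw [gauss, ← Nat.card_sum]
    refine Nat.card_congr (Equiv.trans (Equiv.sumCompl (fun C : {C // P C} => Q C.1)).symm ?_)
    exact Equiv.sumCongr (Equiv.subtypeSubtypeEquivSubtypeInter P Q)
      (Equiv.subtypeSubtypeEquivSubtypeInter P (fun C => ¬ Q C))
  -- the set of bad vectors
  set X := {y : Fin n → ZMod p // y ≠ 0 ∧ leeWtV p n y ≤ 2 * t} with hX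
  have hwt0 : leeWtV p n (0 : Fin n → ZMod p) = 0 := by simp [leeWtV, leeWt]
  haveI : Unique {y : {y : Fin n → ZMod p // leeWtV p n y ≤ 2 * t} // ¬ y.1 ≠ 0} := by
    refine ⟨⟨⟨⟨0, by simp [hwt0]⟩, by simp⟩⟩, ?_⟩
    rintro ⟨⟨y, hy⟩, h⟩
    simp only [ne_eq, not_not] at h
    subst h
    rfl
  have hXcard : Nat.card X + 1 = leeVol' p n (2 * t) := by
    have h1 : leeVol' p n (2 * t)
        = Nat.card {y : {y : Fin n → ZMod p // leeWtV p n y ≤ 2 * t} // y.1 ≠ 0}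
          + Nat.card {y : {y : Fin n → ZMod p // leeWtV p n y ≤ 2 * t} // ¬ y.1 ≠ 0} := by
      rw [leeVol', ← Nat.card_sum]
      exact Nat.card_congr (Equiv.sumCompl _).symm
    have h2 : Nat.card {y : {y : Fin n → ZMod p // leeWtV p n y ≤ 2 * t} // y.1 ≠ 0}
        = Nat.card X :=
      Nat.card_congr ((Equiv.subtypeSubtypeEquivSubtypeInter
        (fun y : Fin n → ZMod p => leeWtV p n y ≤ 2 * t) (fun y => y ≠ 0)).trans
        (Equiv.subtypeEquivRight fun y => and_comm))
    have h3 : Nat.card {y : {y : Fin n → ZMod p // leeWtV p n y ≤ 2 * t} // ¬ y.1 ≠ 0} = 1 :=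
      Nat.card_unique
    rw [h1, h2, h3]
  -- bound on the bad count
  haveI : Fintype X := Fintype.ofFinite X
  have hbad : Nat.card {C // P C ∧ ¬ Q C} ≤ Nat.card X * gauss p (n-1) (k-1) := by
    have hwit : ∀ C : {C // P C ∧ ¬ Q C}, ∃ y : X, y.1 ∈ C.1 := by
      rintro ⟨C, hC, hCQ⟩
      simp only [hQ, not_forall] at hCQ
      obtain ⟨x, hxC, hx0, hxw⟩ := hCQ
      exact ⟨⟨x, hx0, by omega⟩, hxC⟩
    have hinj : Function.Injective
        (fun C : {C // P C ∧ ¬ Q C} =>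
          (⟨(hwit C).choose, ⟨C.1, C.2.1, (hwit C).choose_spec⟩⟩ :
            Σ y : X, {C' : Submodule (ZMod p) (Fin n → ZMod p) //
              finrank (ZMod p) C' = k ∧ y.1 ∈ C'})) := by
      intro C1 C2 h
      have := congrArg (fun s : (Σ y : X, {C' : Submodule (ZMod p) (Fin n → ZMod p) //
          finrank (ZMod p) C' = k ∧ y.1 ∈ C'}) => s.2.1) h
      exact Subtype.ext this
    calc Nat.card {C // P C ∧ ¬ Q C}
        ≤ Nat.card (Σ y : X, {C' : Submodule (ZMod p) (Fin n → ZMod p) //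
            finrank (ZMod p) C' = k ∧ y.1 ∈ C'}) := Nat.card_le_card_of_injective _ hinj
      _ = ∑ y : X, Nat.card {C' : Submodule (ZMod p) (Fin n → ZMod p) //
            finrank (ZMod p) C' = k ∧ y.1 ∈ C'} := by
          haveI : ∀ y : X, Fintype {C' : Submodule (ZMod p) (Fin n → ZMod p) //
            finrank (ZMod p) C' = k ∧ y.1 ∈ C'} := fun y => Fintype.ofFinite _
          rw [Nat.card_eq_fintype_card, Fintype.card_sigma]
          exact Finset.sum_congr rfl fun y _ => (Nat.card_eq_fintype_card).symm
      _ ≤ ∑ _y : X, gauss p (n-1) (k-1) :=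
          Finset.sum_le_sum fun y _ => card_contain_le p n k y.1 y.2.1
      _ = Nat.card X * gauss p (n-1) (k-1) := by
          rw [Finset.sum_const, Nat.card_eq_fintype_card]
          simp [mul_comm]
  -- combine
  show 1 - ((leeVol' p n (2 * t) : ℝ) - 1) * (gauss p (n - 1) (k - 1) : ℝ) / (gauss p n k : ℝ) ≤
      (Nat.card {C // P C ∧ Q C} : ℝ) / (gauss p n k : ℝ)
  have hVX : ((leeVol' p n (2 * t) : ℝ) - 1) = (Nat.card X : ℝ) := by
    rw [← hXcard]; push_cast; ring
  rw [hVX]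
  have hs : (gauss p n k : ℝ)
      = (Nat.card {C // P C ∧ Q C} : ℝ) + (Nat.card {C // P C ∧ ¬ Q C} : ℝ) := by
    exact_mod_cast hsplit
  have hb : (Nat.card {C // P C ∧ ¬ Q C} : ℝ)
      ≤ (Nat.card X : ℝ) * (gauss p (n-1) (k-1) : ℝ) := by exact_mod_cast hbad
  have e1 : 1 - (Nat.card X : ℝ) * (gauss p (n-1) (k-1) : ℝ) / (gauss p n k : ℝ)
      = ((gauss p n k : ℝ) - (Nat.card X : ℝ) * (gauss p (n-1) (k-1) : ℝ)) / (gauss p n k : ℝ) := by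
    rw [sub_div, div_self hg.ne']
  rw [e1]
  exact (div_le_div_iff_of_pos_right hg).mpr (by linarith)
end
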